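/- Let L be a generalized Lagrangian, i.e., a map L from compactly supported smooth functions f on M to functionals on a set U of field configurations, satisfying (1) supp(L(f)) ⊆ supp f (space-time support) and (2) L(f₁ + f₂ + f₃) = L(f₁ + f₂) − L(f₂) + L(f₂ + f₃) whenever supp f₁ ∩ supp f₃ = ∅. Then the relative Lagrangian L_{f₀}(f) := L(f₀ + f) − L(f₀) satisfies supp(L_{f₀}(f)) ⊆ supp f for all f, f₀. -/

import Mathlib

/-- The space-time support of a functional `F` defined on a set `U` of field
configurations. -/
def spacetimeSupport {M : Type*} [TopologicalSpace M]
    (U : Set (M → ℝ)) (F : (M → ℝ) → ℂ) : Set M :=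
  {p | ∀ V ∈ nhds p, ∃ ψ ∈ U, ∃ φ : M → ℝ,
    ψ + φ ∈ U ∧ tsupport φ ⊆ V ∧ F (ψ + φ) ≠ F ψ}

/-!
Fix `p ∉ supp f`. A Urysohn function splits `f₀ = h + k` with `h = 0` near `p` and
`supp k ∩ supp f = ∅`. The additivity axiom for `(f, h, k)` gives
`L(f₀ + f) − L(f₀) = L(f + h) − L(h)`, and `p` lies in the space-time support of neither term on
the right, because `p ∉ supp (f + h)` and `p ∉ supp h`.
-/

open Filter Topology Set

theorem exists_continuous_eventuallyEq_one_disjoint_tsupport {X : Type*} [TopologicalSpace X]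
    [NormalSpace X] [RegularSpace X] {s : Set X} {x : X} (hs : IsClosed s) (hx : x ∉ s) :
    ∃ χ : X → ℝ, Continuous χ ∧ χ =ᶠ[𝓝 x] 1 ∧ Disjoint s (tsupport χ) := by
  obtain ⟨t, ht, htc, hts⟩ := exists_mem_nhds_isClosed_subset (hs.isOpen_compl.mem_nhds hx)
  obtain ⟨u, hu, hsu, hut⟩ :=
    normal_exists_closure_subset hs htc.isOpen_compl (subset_compl_comm.mp hts)
  obtain ⟨χ, hχu, hχt, -⟩ := exists_continuous_zero_one_of_isClosed isClosed_closure htc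
    (subset_compl_iff_disjoint_right.mp hut)
  have hχ_tsupport : tsupport χ ⊆ uᶜ :=
    closure_minimal (fun y hy hyu => hy (hχu (subset_closure hyu))) hu.isClosed_compl
  exact ⟨χ, χ.continuous, eventually_of_mem ht hχt,
    (disjoint_compl_right (a := u)).mono hsu hχ_tsupport⟩

section spacetimeSupport

variable {M : Type*} [TopologicalSpace M]

theorem notMem_spacetimeSupport_iff {U : Set (M → ℝ)} {F : (M → ℝ) → ℂ} {p : M} :
    p ∉ spacetimeSupport U F ↔ ∃ V ∈ 𝓝 p, ∀ ψ ∈ U, ∀ φ : M → ℝ,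
      ψ + φ ∈ U → tsupport φ ⊆ V → F (ψ + φ) = F ψ := by
  simp [spacetimeSupport]

theorem spacetimeSupport_sub_subset (U : Set (M → ℝ)) (F G : (M → ℝ) → ℂ) :
    spacetimeSupport U (fun φ => F φ - G φ) ⊆ spacetimeSupport U F ∪ spacetimeSupport U G := by
  intro p hp
  by_contra hpFG
  rw [mem_union, not_or, notMem_spacetimeSupport_iff, notMem_spacetimeSupport_iff] at hpFG
  obtain ⟨⟨VF, hVF, hF⟩, ⟨VG, hVG, hG⟩⟩ := hpFG
  obtain ⟨ψ, hψ, φ, hψφ, hφ, hne⟩ := hp (VF ∩ VG) (inter_mem hVF hVG)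
  exact hne (by dsimp only; rw [hF ψ hψ φ hψφ (hφ.trans inter_subset_left),
    hG ψ hψ φ hψφ (hφ.trans inter_subset_right)])

end spacetimeSupport

theorem spacetimeSupport_relativeLagrangian_general {M : Type*} [TopologicalSpace M]
    [T2Space M] [NormalSpace M]
    (U : Set (M → ℝ)) (L : (M → ℝ) → ((M → ℝ) → ℂ))
    (hsupp : ∀ f : M → ℝ, Continuous f → HasCompactSupport f →
      spacetimeSupport U (L f) ⊆ tsupport f)
    (hadd : ∀ f₁ f₂ f₃ : M → ℝ,
      Continuous f₁ → HasCompactSupport f₁ →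
      Continuous f₂ → HasCompactSupport f₂ →
      Continuous f₃ → HasCompactSupport f₃ →
      Disjoint (tsupport f₁) (tsupport f₃) →
      ∀ φ, L (f₁ + f₂ + f₃) φ = L (f₁ + f₂) φ - L f₂ φ + L (f₂ + f₃) φ) :
    ∀ f f₀ : M → ℝ, Continuous f → HasCompactSupport f →
      Continuous f₀ → HasCompactSupport f₀ →
      spacetimeSupport U (fun φ => L (f₀ + f) φ - L f₀ φ) ⊆ tsupport f := by
  intro f f₀ hf hfc hf₀ hf₀c p hp
  by_contra hpf
  obtain ⟨χ, hχ, hχp, hfχ⟩ :=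
    exists_continuous_eventuallyEq_one_disjoint_tsupport (isClosed_tsupport f) hpf
  set h := f₀ * (1 - χ)
  set k := f₀ * χ
  have hh : Continuous h := hf₀.mul (continuous_const.sub hχ)
  have hhk : f₀ = h + k := by ring
  have hrel : ∀ φ, L (f₀ + f) φ - L f₀ φ = L (f + h) φ - L h φ := fun φ => by
    have := hadd f h k hf hfc hh hf₀c.mul_right (hf₀.mul hχ) hf₀c.mul_right
      (hfχ.mono_right tsupport_mul_subset_right) φ
    rw [hhk, show h + k + f = f + h + k by abel]
    linear_combination this
  have hph : p ∉ tsupport h :=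
    notMem_tsupport_iff_eventuallyEq.mpr (hχp.mono fun x hx => by simp [h, hx])
  simp only [hrel] at hp
  rcases spacetimeSupport_sub_subset U _ _ hp with hp | hp
  · exact (tsupport_add f h (hsupp _ (hf.add hh) (hfc.add hf₀c.mul_right) hp)).elim hpf hph
  · exact hph (hsupp h hh hf₀c.mul_right hp)

/-- A generalized Lagrangian `L` (space-time support of `L f` contained in
`supp f`, additive in the support function) has relative Lagrangians
`L_{f₀}(f) = L(f₀ + f) − L(f₀)` with space-time support contained in `supp f`. -/
theorem spacetimeSupport_relativeLagrangian {M : Type*} [TopologicalSpace M]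
    [T2Space M] [LocallyCompactSpace M] [NormalSpace M]
    (U : Set (M → ℝ)) (L : (M → ℝ) → ((M → ℝ) → ℂ))
    (hsupp : ∀ f : M → ℝ, Continuous f → HasCompactSupport f →
      spacetimeSupport U (L f) ⊆ tsupport f)
    (hadd : ∀ f₁ f₂ f₃ : M → ℝ,
      Continuous f₁ → HasCompactSupport f₁ →
      Continuous f₂ → HasCompactSupport f₂ →
      Continuous f₃ → HasCompactSupport f₃ →
      Disjoint (tsupport f₁) (tsupport f₃) →
      ∀ φ, L (f₁ + f₂ + f₃) φ = L (f₁ + f₂) φ - L f₂ φ + L (f₂ + f₃) φ) :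
    ∀ f f₀ : M → ℝ, Continuous f → HasCompactSupport f →
      Continuous f₀ → HasCompactSupport f₀ →
      spacetimeSupport U (fun φ => L (f₀ + f) φ - L f₀ φ) ⊆ tsupport f :=
  spacetimeSupport_relativeLagrangian_general U L hsupp hadd
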